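/- Let A, B ∈ ℝ^{n×n}, b ∈ ℝⁿ, θ ∈ [0,1), and let Ω ∈ ℝ^{n×n} be such that Ω + A is invertible. Suppose F(x*) = 0 and ‖(Ω+A)^{-1}‖ < 1/[‖B‖ + ‖Ω‖ + θ(‖Ω+A‖ + ‖B‖ + ‖Ω‖)]. Then any sequence {x^k} in ℝⁿ satisfying the inexact modified Newton condition ‖(Ω+A)x^{k+1} − [Ω x^k + B|x^k| + b]‖ ≤ θ‖F(x^k)‖ for all k ≥ 0 converges linearly to x* from any starting point x^0. -/

import Mathlib

open Matrix Filter

/-- Componentwise absolute value of a vector in Euclidean space. -/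
noncomputable def vabs {n : ℕ} (x : EuclideanSpace ℝ (Fin n)) : EuclideanSpace ℝ (Fin n) :=
  WithLp.toLp 2 (fun i => |x i|)

/-- A matrix acting on Euclidean space (so that vector norms are the Euclidean 2-norm). -/
noncomputable def mulV {n : ℕ} (M : Matrix (Fin n) (Fin n) ℝ) (x : EuclideanSpace ℝ (Fin n)) :
    EuclideanSpace ℝ (Fin n) :=
  Matrix.toEuclideanCLM (𝕜 := ℝ) M x

/-- Spectral norm of a real matrix: the operator norm induced by the Euclidean vector norm. -/
noncomputable def spec {n : ℕ} (M : Matrix (Fin n) (Fin n) ℝ) : ℝ :=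
  ‖Matrix.toEuclideanCLM (𝕜 := ℝ) M‖

/-- The GAVE residual function `F(x) = A x − B |x| − b`. -/
noncomputable def gaveF {n : ℕ} (A B : Matrix (Fin n) (Fin n) ℝ)
    (b : EuclideanSpace ℝ (Fin n)) (x : EuclideanSpace ℝ (Fin n)) : EuclideanSpace ℝ (Fin n) :=
  mulV A x - mulV B (vabs x) - b

/-- The AVE residual function `A x − |x| − b` (the GAVE with `B = I`). -/
noncomputable def aveF {n : ℕ} (A : Matrix (Fin n) (Fin n) ℝ)
    (b : EuclideanSpace ℝ (Fin n)) (x : EuclideanSpace ℝ (Fin n)) : EuclideanSpace ℝ (Fin n) :=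
  mulV A x - vabs x - b

/-- A sequence converges linearly to `xs`: the distances to `xs` contract by a fixed
factor `c < 1` at every step, and the sequence tends to `xs`. -/
def ConvergesLinearlyTo {n : ℕ} (x : ℕ → EuclideanSpace ℝ (Fin n))
    (xs : EuclideanSpace ℝ (Fin n)) : Prop :=
  (∃ c : ℝ, 0 ≤ c ∧ c < 1 ∧ ∀ k : ℕ, ‖x (k + 1) - xs‖ ≤ c * ‖x k - xs‖) ∧
    Tendsto x atTop (nhds xs)

/-
Subtracting the fixed-point form `(Ω + A) x* = Ω x* + B|x*| + b` of `F(x*) = 0` from the inexact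
step gives `(Ω + A)(x^{k+1} - x*) = r^k + Ω(x^k - x*) + B(|x^k| - |x*|)` with `‖r^k‖ ≤ θ‖F(x^k)‖`.
Since `|·|` is 1-Lipschitz and `‖F(x^k)‖ = ‖F(x^k) - F(x*)‖ ≤ (‖Ω + A‖ + ‖Ω‖ + ‖B‖)‖x^k - x*‖`,
the error contracts by the factor `‖(Ω + A)⁻¹‖ (‖B‖ + ‖Ω‖ + θ(‖Ω + A‖ + ‖B‖ + ‖Ω‖)) < 1`.
-/

theorem tendsto_of_norm_sub_le_mul {E : Type*} [SeminormedAddCommGroup E] {x : ℕ → E} {a : E}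
    {c : ℝ} (hc0 : 0 ≤ c) (hc1 : c < 1) (h : ∀ k, ‖x (k + 1) - a‖ ≤ c * ‖x k - a‖) :
    Tendsto x atTop (nhds a) := by
  rw [tendsto_iff_norm_sub_tendsto_zero]
  have hgeom (k : ℕ) : ‖x k - a‖ ≤ c ^ k * ‖x 0 - a‖ :=
    le_geom (u := fun k => ‖x k - a‖) hc0 k fun j _ => h j
  refine squeeze_zero (fun _ => norm_nonneg _) hgeom ?_
  simpa using (tendsto_pow_atTop_nhds_zero_of_lt_one hc0 hc1).mul_const ‖x 0 - a‖

theorem ConvergesLinearlyTo.of_norm_sub_le_mul {n : ℕ} {x : ℕ → EuclideanSpace ℝ (Fin n)}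
    {xs : EuclideanSpace ℝ (Fin n)} {c : ℝ} (hc0 : 0 ≤ c) (hc1 : c < 1)
    (h : ∀ k, ‖x (k + 1) - xs‖ ≤ c * ‖x k - xs‖) : ConvergesLinearlyTo x xs :=
  ⟨⟨c, hc0, hc1, h⟩, tendsto_of_norm_sub_le_mul hc0 hc1 h⟩

section Euclidean

variable {n : ℕ}

theorem norm_vabs_sub_vabs_le (u v : EuclideanSpace ℝ (Fin n)) :
    ‖vabs u - vabs v‖ ≤ ‖u - v‖ := by
  rw [EuclideanSpace.norm_eq, EuclideanSpace.norm_eq]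
  gcongr with i
  exact abs_abs_sub_abs_le_abs_sub (u i) (v i)

theorem spec_nonneg (M : Matrix (Fin n) (Fin n) ℝ) : 0 ≤ spec M := norm_nonneg _

theorem spec_sub_le (M N : Matrix (Fin n) (Fin n) ℝ) : spec (M - N) ≤ spec M + spec N := by
  simpa only [spec, map_sub] using norm_sub_le _ _

theorem norm_mulV_le (M : Matrix (Fin n) (Fin n) ℝ) (u : EuclideanSpace ℝ (Fin n)) :
    ‖mulV M u‖ ≤ spec M * ‖u‖ :=
  (Matrix.toEuclideanCLM (𝕜 := ℝ) M).le_opNorm u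

theorem mulV_sub (M : Matrix (Fin n) (Fin n) ℝ) (u v : EuclideanSpace ℝ (Fin n)) :
    mulV M (u - v) = mulV M u - mulV M v :=
  map_sub _ u v

theorem add_mulV (M N : Matrix (Fin n) (Fin n) ℝ) (u : EuclideanSpace ℝ (Fin n)) :
    mulV (M + N) u = mulV M u + mulV N u := by
  simp only [mulV, map_add, _root_.add_apply]

theorem norm_le_spec_inv_mul_norm_mulV {M : Matrix (Fin n) (Fin n) ℝ} (hM : IsUnit M)
    (u : EuclideanSpace ℝ (Fin n)) : ‖u‖ ≤ spec M⁻¹ * ‖mulV M u‖ := by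
  have hinv : M⁻¹ * M = 1 := Matrix.nonsing_inv_mul M ((Matrix.isUnit_iff_isUnit_det M).mp hM)
  have hu : mulV M⁻¹ (mulV M u) = u := by
    simp [mulV, ← mul_apply_eq_comp, ← _root_.map_mul, hinv]
  calc ‖u‖ = ‖mulV M⁻¹ (mulV M u)‖ := by rw [hu]
    _ ≤ spec M⁻¹ * ‖mulV M u‖ := norm_mulV_le _ _

theorem norm_mulV_vabs_sub_vabs_le (M : Matrix (Fin n) (Fin n) ℝ)
    (u v : EuclideanSpace ℝ (Fin n)) :
    ‖mulV M (vabs u - vabs v)‖ ≤ spec M * ‖u - v‖ :=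
  (norm_mulV_le _ _).trans (mul_le_mul_of_nonneg_left (norm_vabs_sub_vabs_le u v) (spec_nonneg M))

theorem norm_gaveF_le {A B : Matrix (Fin n) (Fin n) ℝ} {b xs : EuclideanSpace ℝ (Fin n)}
    (hxs : gaveF A B b xs = 0) (x : EuclideanSpace ℝ (Fin n)) :
    ‖gaveF A B b x‖ ≤ (spec A + spec B) * ‖x - xs‖ := by
  have hF : gaveF A B b x = mulV A (x - xs) - mulV B (vabs x - vabs xs) := by
    rw [← sub_zero (gaveF A B b x), ← hxs]
    simp only [gaveF, mulV_sub]
    abel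
  calc ‖gaveF A B b x‖ ≤ ‖mulV A (x - xs)‖ + ‖mulV B (vabs x - vabs xs)‖ := by
        rw [hF]; exact norm_sub_le _ _
    _ ≤ spec A * ‖x - xs‖ + spec B * ‖x - xs‖ := by
        gcongr
        exacts [norm_mulV_le _ _, norm_mulV_vabs_sub_vabs_le _ _ _]
    _ = (spec A + spec B) * ‖x - xs‖ := by ring

theorem norm_sub_le_of_inexactMN_step {A B Ω : Matrix (Fin n) (Fin n) ℝ}
    {b xs x y : EuclideanSpace ℝ (Fin n)} {θ : ℝ} (hθ : 0 ≤ θ) (hinv : IsUnit (Ω + A))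
    (hxs : gaveF A B b xs = 0)
    (hy : ‖mulV (Ω + A) y - (mulV Ω x + mulV B (vabs x) + b)‖ ≤ θ * ‖gaveF A B b x‖) :
    ‖y - xs‖ ≤
      spec (Ω + A)⁻¹ * (spec B + spec Ω + θ * (spec (Ω + A) + spec B + spec Ω)) * ‖x - xs‖ := by
  set r := mulV (Ω + A) y - (mulV Ω x + mulV B (vabs x) + b)
  have hA : spec A ≤ spec (Ω + A) + spec Ω := by simpa using spec_sub_le (Ω + A) Ω
  have hF : ‖gaveF A B b x‖ ≤ (spec (Ω + A) + spec B + spec Ω) * ‖x - xs‖ :=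
    (norm_gaveF_le hxs x).trans (mul_le_mul_of_nonneg_right (by linarith) (norm_nonneg _))
  have hsplit : mulV (Ω + A) (y - xs) = r + mulV Ω (x - xs) + mulV B (vabs x - vabs xs) := by
    rw [← add_zero (mulV (Ω + A) (y - xs)), ← hxs]
    simp only [r, gaveF, mulV_sub, add_mulV]
    abel
  calc ‖y - xs‖ ≤ spec (Ω + A)⁻¹ * ‖mulV (Ω + A) (y - xs)‖ :=
        norm_le_spec_inv_mul_norm_mulV hinv _
    _ ≤ spec (Ω + A)⁻¹ * (θ * ‖gaveF A B b x‖ + spec Ω * ‖x - xs‖ + spec B * ‖x - xs‖) := by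
        rw [hsplit]
        gcongr
        · exact spec_nonneg _
        · refine (norm_add₃_le ..).trans ?_
          gcongr
          exacts [norm_mulV_le _ _, norm_mulV_vabs_sub_vabs_le _ _ _]
    _ ≤ spec (Ω + A)⁻¹ * (θ * ((spec (Ω + A) + spec B + spec Ω) * ‖x - xs‖) +
          spec Ω * ‖x - xs‖ + spec B * ‖x - xs‖) := by
        gcongr
        exact spec_nonneg _
    _ = spec (Ω + A)⁻¹ * (spec B + spec Ω + θ * (spec (Ω + A) + spec B + spec Ω)) * ‖x - xs‖ := by
        ring

end Euclidean

theorem mul_lt_one_of_lt_one_div {a d : ℝ} (ha : 0 ≤ a) (hd : 0 ≤ d) (h : a < 1 / d) :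
    a * d < 1 := by
  rcases hd.eq_or_lt with rfl | hd
  · simp only [div_zero] at h
    linarith
  · exact (lt_div_iff₀ hd).mp h

theorem stmt4_general {n : ℕ} (A B Ω : Matrix (Fin n) (Fin n) ℝ)
    (b : EuclideanSpace ℝ (Fin n)) (θ : ℝ) (hθ0 : 0 ≤ θ)
    (hinv : IsUnit (Ω + A))
    (xs : EuclideanSpace ℝ (Fin n)) (hxs : gaveF A B b xs = 0)
    (hcond : spec (Ω + A)⁻¹ <
      1 / (spec B + spec Ω + θ * (spec (Ω + A) + spec B + spec Ω)))
    (x : ℕ → EuclideanSpace ℝ (Fin n))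
    (hx : ∀ k : ℕ, ‖mulV (Ω + A) (x (k + 1)) - (mulV Ω (x k) + mulV B (vabs (x k)) + b)‖ ≤
      θ * ‖gaveF A B b (x k)‖) :
    ConvergesLinearlyTo x xs := by
  have hD : 0 ≤ spec B + spec Ω + θ * (spec (Ω + A) + spec B + spec Ω) := by
    have := spec_nonneg B; have := spec_nonneg Ω; have := spec_nonneg (Ω + A)
    positivity
  exact ConvergesLinearlyTo.of_norm_sub_le_mul (mul_nonneg (spec_nonneg _) hD)
    (mul_lt_one_of_lt_one_div (spec_nonneg _) hD hcond)
    fun k => norm_sub_le_of_inexactMN_step hθ0 hinv hxs (hx k)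

theorem stmt4 {n : ℕ} (A B Ω : Matrix (Fin n) (Fin n) ℝ)
    (b : EuclideanSpace ℝ (Fin n)) (θ : ℝ) (hθ0 : 0 ≤ θ) (hθ1 : θ < 1)
    (hinv : IsUnit (Ω + A))
    (xs : EuclideanSpace ℝ (Fin n)) (hxs : gaveF A B b xs = 0)
    (hcond : spec (Ω + A)⁻¹ <
      1 / (spec B + spec Ω + θ * (spec (Ω + A) + spec B + spec Ω)))
    (x : ℕ → EuclideanSpace ℝ (Fin n))
    (hx : ∀ k : ℕ, ‖mulV (Ω + A) (x (k + 1)) - (mulV Ω (x k) + mulV B (vabs (x k)) + b)‖ ≤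
      θ * ‖gaveF A B b (x k)‖) :
    ConvergesLinearlyTo x xs :=
  stmt4_general A B Ω b θ hθ0 hinv xs hxs hcond x hx
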